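/- For any path-connected space X, cat(X) ≤ TC(X) ≤ cat(X × X), where cat is the non-normalized LS-category and TC is the topological complexity. -/

import Mathlib

open Set unitInterval

universe u v

/-- A motion planner on a subset `U ⊆ X × X`: a continuous choice of paths
joining the two coordinates of each point of `U`. -/
def IsMotionPlanner {X : Type u} [TopologicalSpace X] (U : Set (X × X))
    (s : C(U, C(unitInterval, X))) : Prop :=
  ∀ z : U, ((s z) 0, (s z) 1) = (z : X × X)

/-- `X × X` admits an open cover by `n` sets, each admitting a continuous section of
the path fibration `p : X^I → X × X`, `p(α) = (α 0, α 1)`. -/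
def TCCover (X : Type u) [TopologicalSpace X] (n : ℕ) : Prop :=
  ∃ U : Fin n → Set (X × X),
    (∀ i, IsOpen (U i)) ∧ (∀ z : X × X, ∃ i, z ∈ U i) ∧
      ∀ i, ∃ s : C(U i, C(unitInterval, X)), IsMotionPlanner (U i) s

/-- (Non-normalized) topological complexity of Farber. -/
noncomputable def topologicalComplexity (X : Type u) [TopologicalSpace X] : ℕ :=
  sInf {n | TCCover X n}

/-- Monoidal version: each set contains the diagonal and the sections are constant paths
on the diagonal. -/
def TCMCover (X : Type u) [TopologicalSpace X] (n : ℕ) : Prop :=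
  ∃ U : Fin n → Set (X × X),
    (∀ i, IsOpen (U i)) ∧ (∀ i (x : X), (x, x) ∈ U i) ∧ (∀ z : X × X, ∃ i, z ∈ U i) ∧
      ∀ i, ∃ s : C(U i, C(unitInterval, X)), IsMotionPlanner (U i) s ∧
        ∀ (x : X) (h : (x, x) ∈ U i), s ⟨(x, x), h⟩ = ContinuousMap.const unitInterval x

/-- Monoidal topological complexity of Iwase–Sakai (non-normalized). -/
noncomputable def monoidalTC (X : Type u) [TopologicalSpace X] : ℕ :=
  sInf {n | TCMCover X n}

/-- `X` admits an open cover by `n` sets, each contractible in `X`. -/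
def catCover (X : Type u) [TopologicalSpace X] (n : ℕ) : Prop :=
  ∃ U : Fin n → Set X,
    (∀ i, IsOpen (U i)) ∧ (∀ x : X, ∃ i, x ∈ U i) ∧
      ∀ i, ∃ x₀ : X, ContinuousMap.Homotopic
        (⟨Subtype.val, continuous_subtype_val⟩ : C(U i, X)) (ContinuousMap.const (U i) x₀)

/-- Non-normalized Lusternik–Schnirelmann category (`LScat pt = 1`). -/
noncomputable def LScat (X : Type u) [TopologicalSpace X] : ℕ :=
  sInf {n | catCover X n}

/-- `X` is `q`-connected: path-connected with trivial homotopy groups `π_k` for `1 ≤ k ≤ q`. -/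
def IsQConnected (X : Type u) [TopologicalSpace X] (q : ℕ) : Prop :=
  PathConnectedSpace X ∧
    ∀ k : ℕ, 1 ≤ k → k ≤ q → ∀ x : X, Subsingleton (HomotopyGroup (Fin k) X x)

/-- `X` carries a CW-structure all of whose cells have dimension at most `m`:
there are characteristic maps from closed euclidean balls whose open-cell images cover `X`
injectively, cell boundaries attach to cells of lower dimension, no cells above dimension `m`,
and `X` has the weak topology determined by the cells. -/
def IsCWComplexOfDimLE (X : Type u) [TopologicalSpace X] (m : ℕ) : Prop :=
  ∃ (cells : ℕ → Type) (Φ : ∀ n, cells n →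
      C((Metric.closedBall (0 : EuclideanSpace ℝ (Fin n)) 1 :
          Set (EuclideanSpace ℝ (Fin n))), X)),
    (∀ n, m < n → IsEmpty (cells n)) ∧
    (∀ x : X, ∃ n, ∃ i : cells n,
        ∃ b : (Metric.closedBall (0 : EuclideanSpace ℝ (Fin n)) 1 :
            Set (EuclideanSpace ℝ (Fin n))),
          ‖(b : EuclideanSpace ℝ (Fin n))‖ < 1 ∧ Φ n i b = x) ∧
    (∀ n (i : cells n), Set.InjOn (Φ n i) {b | ‖(b : EuclideanSpace ℝ (Fin n))‖ < 1}) ∧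
    (∀ n (i : cells n)
        (b : (Metric.closedBall (0 : EuclideanSpace ℝ (Fin n)) 1 :
            Set (EuclideanSpace ℝ (Fin n)))),
        ‖(b : EuclideanSpace ℝ (Fin n))‖ = 1 →
        ∃ k, k < n ∧ ∃ j : cells k,
          ∃ b' : (Metric.closedBall (0 : EuclideanSpace ℝ (Fin k)) 1 :
              Set (EuclideanSpace ℝ (Fin k))),
            Φ k j b' = Φ n i b) ∧
    (∀ A : Set X, (∀ n (i : cells n), IsClosed ((Φ n i) ⁻¹' A)) → IsClosed A)

/-! A cover of `X × X` by sets contractible in `X × X` is a TC-cover: for `z` in a set contracted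
to `c`, the motion planner runs from `z.1` to `c.1` along the first coordinate of the
contraction, crosses to `c.2` along a fixed path, and returns to `z.2` along the reversed second
coordinate. Conversely, a motion planner on `U` restricted to the slice `X × {x₀}` contracts that
slice to `x₀`, and products of contractible sets give a categorical cover of `X × X`. -/

section PathFamilies

variable {X : Type*} [TopologicalSpace X]

theorem exists_motionPlanner_iff {U : Set (X × X)} :
    (∃ s, IsMotionPlanner U s) ↔
      ∃ γ : ∀ z : U, Path (z : X × X).1 (z : X × X).2, Continuous ↿γ := by
  constructor
  · rintro ⟨s, hs⟩
    refine ⟨fun z => ⟨s z, congrArg Prod.fst (hs z), congrArg Prod.snd (hs z)⟩, ?_⟩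
    exact continuous_eval.comp (s.continuous.prodMap continuous_id)
  · rintro ⟨γ, hγ⟩
    exact ⟨ContinuousMap.curry ⟨↿γ, hγ⟩, fun z => Prod.ext (γ z).source (γ z).target⟩

theorem homotopic_subtypeVal_const_iff {V : Set X} {x₀ : X} :
    (⟨Subtype.val, continuous_subtype_val⟩ : C(V, X)).Homotopic (ContinuousMap.const V x₀) ↔
      ∃ γ : ∀ x : V, Path (x : X) x₀, Continuous ↿γ := by
  constructor
  · rintro ⟨H⟩
    exact ⟨fun x => ⟨⟨fun t => H (t, x), by fun_prop⟩, H.apply_zero x, H.apply_one x⟩,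
      H.continuous.comp continuous_swap⟩
  · rintro ⟨γ, hγ⟩
    exact ⟨{ toFun := fun p => γ p.2 p.1
             continuous_toFun := hγ.comp continuous_swap
             map_zero_left := fun x => (γ x).source
             map_one_left := fun x => (γ x).target }⟩

end PathFamilies

section Covers

variable {X Y : Type*} [TopologicalSpace X] [TopologicalSpace Y]

theorem catCover_of_tcCover [Nonempty X] {n : ℕ} (h : TCCover X n) : catCover X n := by
  obtain ⟨U, hU, hcov, hplan⟩ := h
  obtain ⟨x₀⟩ := ‹Nonempty X›
  refine ⟨fun i => {x | (x, x₀) ∈ U i}, fun i => (hU i).preimage (by fun_prop),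
    fun x => hcov (x, x₀), fun i => ⟨x₀, ?_⟩⟩
  obtain ⟨γ, hγ⟩ := exists_motionPlanner_iff.mp (hplan i)
  exact homotopic_subtypeVal_const_iff.mpr
    ⟨fun x => γ ⟨(x, x₀), x.2⟩,
      hγ.comp (((continuous_subtype_val.prodMk continuous_const).subtype_mk _).prodMap
        continuous_id)⟩

theorem catCover.prod {m n : ℕ} (hX : catCover X m) (hY : catCover Y n) :
    catCover (X × Y) (m * n) := by
  obtain ⟨U, hU, hUcov, hUcon⟩ := hX
  obtain ⟨V, hV, hVcov, hVcon⟩ := hY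
  refine ⟨fun k => U (finProdFinEquiv.symm k).1 ×ˢ V (finProdFinEquiv.symm k).2,
    fun k => (hU _).prod (hV _), fun z => ?_, fun k => ?_⟩
  · obtain ⟨i, hi⟩ := hUcov z.1
    obtain ⟨j, hj⟩ := hVcov z.2
    exact ⟨finProdFinEquiv (i, j), by simp [hi, hj]⟩
  · obtain ⟨x₀, hx₀⟩ := hUcon (finProdFinEquiv.symm k).1
    obtain ⟨y₀, hy₀⟩ := hVcon (finProdFinEquiv.symm k).2
    obtain ⟨γ, hγ⟩ := homotopic_subtypeVal_const_iff.mp hx₀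
    obtain ⟨δ, hδ⟩ := homotopic_subtypeVal_const_iff.mp hy₀
    refine ⟨(x₀, y₀), homotopic_subtypeVal_const_iff.mpr
      ⟨fun z => (γ ⟨z.1.1, z.2.1⟩).prod (δ ⟨z.1.2, z.2.2⟩), ?_⟩⟩
    exact (hγ.comp (((continuous_fst.comp continuous_subtype_val).subtype_mk
        fun z => z.2.1).prodMap continuous_id)).prodMk
      (hδ.comp (((continuous_snd.comp continuous_subtype_val).subtype_mk
        fun z => z.2.2).prodMap continuous_id))

theorem tcCover_of_catCover_prod [PathConnectedSpace X] {n : ℕ} (h : catCover (X × X) n) :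
    TCCover X n := by
  obtain ⟨U, hU, hcov, hcon⟩ := h
  refine ⟨U, hU, hcov, fun i => exists_motionPlanner_iff.mpr ?_⟩
  obtain ⟨c, hc⟩ := hcon i
  obtain ⟨γ, hγ⟩ := homotopic_subtypeVal_const_iff.mp hc
  refine ⟨fun z => ((γ z).map continuous_fst).trans
    ((PathConnectedSpace.somePath c.1 c.2).trans ((γ z).map continuous_snd).symm), ?_⟩
  exact Path.trans_continuous_family _ (continuous_fst.comp hγ) _
    (Path.trans_continuous_family _ (by fun_prop) _
      (Path.symm_continuous_family _ (continuous_snd.comp hγ)))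

end Covers

/-- The second hypothesis is needed because `sInf ∅ = 0` in `ℕ`. -/
theorem Nat.sInf_le_sInf_of_imp {P Q : ℕ → Prop} (hQP : ∀ n, Q n → P n)
    (hPQ : (∃ n, P n) → ∃ n, Q n) : sInf {n | P n} ≤ sInf {n | Q n} := by
  rcases {n | Q n}.eq_empty_or_nonempty with hQ | hQ
  · have hP : {n | P n} = ∅ :=
      Set.eq_empty_of_forall_notMem fun n hn => hQ.subset (hPQ ⟨n, hn⟩).choose_spec
    simp [hP, hQ]
  · exact Nat.sInf_le (hQP _ (Nat.sInf_mem hQ))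

theorem cat_le_TC_le_cat_square_general (X : Type u) [TopologicalSpace X]
    [PathConnectedSpace X] :
    LScat X ≤ topologicalComplexity X ∧ topologicalComplexity X ≤ LScat (X × X) := by
  refine ⟨Nat.sInf_le_sInf_of_imp (fun _ => catCover_of_tcCover) ?_,
    Nat.sInf_le_sInf_of_imp (fun _ => tcCover_of_catCover_prod) ?_⟩
  · rintro ⟨n, h⟩
    exact ⟨n * n, tcCover_of_catCover_prod (h.prod h)⟩
  · rintro ⟨n, h⟩
    exact ⟨n * n, (catCover_of_tcCover h).prod (catCover_of_tcCover h)⟩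

/-- `cat(X) ≤ TC(X) ≤ cat(X × X)` for a path-connected paracompact
space `X` (non-normalized conventions). -/
theorem cat_le_TC_le_cat_square (X : Type u) [TopologicalSpace X]
    [PathConnectedSpace X] [ParacompactSpace X] :
    LScat X ≤ topologicalComplexity X ∧ topologicalComplexity X ≤ LScat (X × X) :=
  cat_le_TC_le_cat_square_general X
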